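/- Under the hypotheses on (v₁,…,v_d; λ₁,…,λ_d; c; a) stated in the context, for all distinct j,k ∈ {1,…,n} and all fixed values of the remaining coordinates of t, the function e^{−tⱼ−tₖ}·vⱼᵀ(Hess g₀)(ξ(t))vₖ tends to 0 as tⱼ → −∞, and also tends to 0 as tₖ → −∞. -/

import Mathlib

/-!
With `Z_φ(ξ) = Σ_{u∈S} φ_u e^{2⟨u,ξ⟩}`, the potential `g₀` is a combination of the functions
`log Z_φ` for the weights `φ = c·lᵢ` and `φ = c`, and the Hessian of `log Z_φ` at `ξ` is four times
the covariance of `u ↦ ⟨u,w₁⟩` and `u ↦ ⟨u,w₂⟩` for the weights `φ_u e^{2⟨u,ξ⟩}` on `S`.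
Along `ξ(t)` with `tⱼ = s`, these weights are `q_u X^{⟨u,vⱼ⟩}` with `X = e^{2s}`, and hypotheses (i)
and (ii) say that, for each of the `d + 1` weights, the least exponent is attained with positive
weight. After shifting the exponents, the covariance of the exponent `⟨u,vⱼ⟩` with any function is
a rational function of `X` that is smooth at `X = 0` and vanishes there, because the limiting
weights sit on a single level of the exponent. It is therefore `O(X) = O(e^{2s})`, which beats the
factor `e^{-s}`.
-/

open Filter

noncomputable section

/-- First directional derivative of `g` at `x` in direction `w`. -/
def pd1 {n : ℕ} (g : (Fin n → ℝ) → ℝ) (x w : Fin n → ℝ) : ℝ :=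
  fderiv ℝ g x w

/-- Second derivative (Hessian bilinear form) of `g` at `x` applied to `w₁, w₂`. -/
def pd2 {n : ℕ} (g : (Fin n → ℝ) → ℝ) (x w₁ w₂ : Fin n → ℝ) : ℝ :=
  fderiv ℝ (fun y => fderiv ℝ g y w₁) x w₂

/-- `ξ(t) = t₁ v₁ + ⋯ + tₙ vₙ`. -/
def xi {n : ℕ} (v : Fin n → (Fin n → ℝ)) (t : Fin n → ℝ) : Fin n → ℝ :=
  ∑ m, t m • v m

/-- The growth condition (∗) with data `(v₁,…,vₙ; a₁,…,aₙ)`. -/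
def GrowthCondition {n : ℕ} (v : Fin n → (Fin n → ℝ)) (a : Fin n → ℝ)
    (g : (Fin n → ℝ) → ℝ) : Prop :=
  (∀ j : Fin n, ∀ t : Fin n → ℝ, ∃ L : ℝ,
    Tendsto (fun s : ℝ =>
        2 * Real.exp (-2 * s) * (pd1 g (xi v (Function.update t j s)) (v j) + a j))
      atBot (nhds L) ∧
    Tendsto (fun s : ℝ =>
        Real.exp (-2 * s) * pd2 g (xi v (Function.update t j s)) (v j) (v j))
      atBot (nhds L)) ∧
  (∀ j k l : Fin n, ∀ t : Fin n → ℝ, ∃ L : ℝ,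
    Tendsto (fun s : ℝ => pd2 g (xi v (Function.update t l s)) (v j) (v k))
      atBot (nhds L)) ∧
  (∀ j k : Fin n, j ≠ k → ∀ t : Fin n → ℝ,
    Tendsto (fun s : ℝ =>
        Real.exp (-s - t k) * pd2 g (xi v (Function.update t j s)) (v j) (v k))
      atBot (nhds 0) ∧
    Tendsto (fun s : ℝ =>
        Real.exp (-(t j) - s) * pd2 g (xi v (Function.update t k s)) (v j) (v k))
      atBot (nhds 0))

/-- The affine-linear function `lᵢ(u) = ⟨u,vᵢ⟩ + λᵢ` (integer version). -/
def lfun {n d : ℕ} (v : Fin d → Fin n → ℤ) (lam : Fin d → ℤ) (i : Fin d)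
    (u : Fin n → ℤ) : ℤ :=
  (∑ j, u j * v i j) + lam i

/-- The affine-linear function `lᵢ(x) = ⟨x,vᵢ⟩ + λᵢ` (real version). -/
def lfunR {n d : ℕ} (v : Fin d → Fin n → ℤ) (lam : Fin d → ℤ) (i : Fin d)
    (x : Fin n → ℝ) : ℝ :=
  (∑ j, x j * (v i j : ℝ)) + (lam i : ℝ)

/-- Guillemin's potential
`g₀(ξ) = -(1/2) Σᵢ aᵢ log( (Σ_{u∈S} c_u lᵢ(u) e^{2⟨u,ξ⟩}) / (Σ_{u∈S} c_u e^{2⟨u,ξ⟩}) )`. -/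
def gzero {n d : ℕ} (v : Fin d → Fin n → ℤ) (lam : Fin d → ℤ)
    (S : Finset (Fin n → ℤ)) (c : (Fin n → ℤ) → ℝ) (a : Fin d → ℤ)
    (ξ : Fin n → ℝ) : ℝ :=
  -(1/2) * ∑ i : Fin d, (a i : ℝ) *
    Real.log ((∑ u ∈ S, c u * (lfun v lam i u : ℝ) * Real.exp (2 * ∑ m, (u m : ℝ) * ξ m)) /
      (∑ u ∈ S, c u * Real.exp (2 * ∑ m, (u m : ℝ) * ξ m)))

open Real Topology Asymptotics

section SecondDerivative

variable {n : ℕ}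

theorem pd2_eq_iteratedFDeriv {g : (Fin n → ℝ) → ℝ} {x : Fin n → ℝ} (hg : ContDiffAt ℝ 2 g x)
    (w₁ w₂ : Fin n → ℝ) : pd2 g x w₁ w₂ = iteratedFDeriv ℝ 2 g x ![w₂, w₁] := by
  have hdg : DifferentiableAt ℝ (fderiv ℝ g) x :=
    (hg.fderiv_right (m := 1) le_rfl).differentiableAt one_ne_zero
  rw [iteratedFDeriv_two_apply, pd2, fderiv_clm_apply hdg (differentiableAt_const w₁)]
  simp

theorem pd2_sub {f g : (Fin n → ℝ) → ℝ} {x : Fin n → ℝ} (hf : ContDiffAt ℝ 2 f x)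
    (hg : ContDiffAt ℝ 2 g x) (w₁ w₂ : Fin n → ℝ) :
    pd2 (fun y => f y - g y) x w₁ w₂ = pd2 f x w₁ w₂ - pd2 g x w₁ w₂ := by
  rw [pd2_eq_iteratedFDeriv (hf.sub hg), pd2_eq_iteratedFDeriv hf, pd2_eq_iteratedFDeriv hg,
    fun_iteratedFDeriv_sub_apply hf hg]
  rfl

theorem pd2_sum_const_mul {ι : Type*} (s : Finset ι) (c : ι → ℝ) {g : ι → (Fin n → ℝ) → ℝ}
    {x : Fin n → ℝ} (hg : ∀ i ∈ s, ContDiffAt ℝ 2 (g i) x) (w₁ w₂ : Fin n → ℝ) :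
    pd2 (fun y => ∑ i ∈ s, c i * g i y) x w₁ w₂ = ∑ i ∈ s, c i * pd2 (g i) x w₁ w₂ := by
  have hcg : ∀ i ∈ s, ContDiffAt ℝ 2 (fun y => c i • g i y) x :=
    fun i hi => (hg i hi).const_smul (c i)
  change pd2 (fun y => ∑ i ∈ s, c i • g i y) x w₁ w₂ = _
  rw [pd2_eq_iteratedFDeriv (ContDiffAt.sum hcg), iteratedFDeriv_fun_sum_apply hcg]
  simp only [sum_apply]
  refine Finset.sum_congr rfl fun i hi => ?_
  rw [iteratedFDeriv_const_smul_apply' (hg i hi), pd2_eq_iteratedFDeriv (hg i hi)]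
  rfl

theorem pd2_log {T : (Fin n → ℝ) → ℝ} (hT : ContDiff ℝ 2 T) (hT0 : ∀ y, T y ≠ 0)
    (x w₁ w₂ : Fin n → ℝ) :
    pd2 (fun y => log (T y)) x w₁ w₂
      = pd2 T x w₁ w₂ / T x - pd1 T x w₁ * pd1 T x w₂ / T x ^ 2 := by
  have hdT : Differentiable ℝ T := hT.differentiable two_ne_zero
  have hD : Differentiable ℝ (fun y => fderiv ℝ T y w₁) := fun y =>
    ((hT.fderiv_right (m := 1) le_rfl).differentiable one_ne_zero y).clm_apply
      (differentiableAt_const w₁)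
  have hlog : (fun y => fderiv ℝ (fun y => log (T y)) y w₁)
      = fun y => (T y)⁻¹ * fderiv ℝ T y w₁ := by
    funext y
    rw [fderiv.log (hdT y) (hT0 y)]
    rfl
  have hinv : HasFDerivAt (fun y => (T y)⁻¹) (-(T x ^ 2)⁻¹ • fderiv ℝ T x) x :=
    (hasDerivAt_inv (hT0 x)).comp_hasFDerivAt x (hdT x).hasFDerivAt
  rw [pd2, hlog, (hinv.fun_mul (hD x).hasFDerivAt).fderiv]
  simp only [pd1, pd2, add_apply, smul_apply, smul_eq_mul]
  field_simp
  ring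

end SecondDerivative

section WeightedCovariance

variable {ι : Type*} (s : Finset ι)

def weightedCov (W f g : ι → ℝ) : ℝ :=
  (∑ u ∈ s, W u * f u * g u) / (∑ u ∈ s, W u)
    - (∑ u ∈ s, W u * f u) * (∑ u ∈ s, W u * g u) / (∑ u ∈ s, W u) ^ 2

theorem weightedCov_comm (W f g : ι → ℝ) : weightedCov s W f g = weightedCov s W g f := by
  simp only [weightedCov, mul_right_comm _ (f _), mul_comm (∑ u ∈ s, W u * f u)]

theorem weightedCov_const_mul_weight {κ : ℝ} (hκ : κ ≠ 0) (W f g : ι → ℝ) :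
    weightedCov s (fun u => κ * W u) f g = weightedCov s W f g := by
  simp only [weightedCov, mul_assoc, ← Finset.mul_sum]
  by_cases hW : ∑ u ∈ s, W u = 0
  · simp [hW]
  · field_simp

theorem weightedCov_add_const (W f g : ι → ℝ) (b : ℝ) :
    weightedCov s W (fun u => f u + b) g = weightedCov s W f g := by
  simp only [weightedCov, mul_add, add_mul, Finset.sum_add_distrib, mul_right_comm _ b,
    ← Finset.sum_mul]
  by_cases hW : ∑ u ∈ s, W u = 0
  · simp [hW]
  · field_simp
    ring

theorem weightedCov_congr {W W' f f' : ι → ℝ} (hW : ∀ u ∈ s, W u = W' u)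
    (hf : ∀ u ∈ s, W u ≠ 0 → f u = f' u) (g : ι → ℝ) :
    weightedCov s W f g = weightedCov s W' f' g := by
  have hWf : ∀ u ∈ s, W u * f u = W' u * f' u := fun u hu => by
    by_cases h : W u = 0
    · simp [h, ← hW u hu]
    · rw [hf u hu h, hW u hu]
  rw [weightedCov, weightedCov, Finset.sum_congr rfl hW, Finset.sum_congr rfl hWf,
    Finset.sum_congr rfl fun u hu => congrArg (· * g u) (hWf u hu),
    Finset.sum_congr rfl fun u hu => congrArg (· * g u) (hW u hu)]

theorem isBigO_weightedCov_pow {q : ι → ℝ} {k : ι → ℕ} (hq : ∀ u ∈ s, 0 ≤ q u) {u₁ : ι}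
    (hu₁ : u₁ ∈ s) (hq₁ : 0 < q u₁) (hk₁ : k u₁ = 0) (g : ι → ℝ) :
    (fun X : ℝ => weightedCov s (fun u => q u * X ^ k u) (fun u => (k u : ℝ)) g)
      =O[𝓝 0] fun X => X := by
  have hN : ∑ u ∈ s, q u * (0 : ℝ) ^ k u ≠ 0 :=
    (Finset.sum_pos' (fun u hu => mul_nonneg (hq u hu) (pow_nonneg le_rfl _))
      ⟨u₁, hu₁, by simpa [hk₁] using hq₁⟩).ne'
  have hdiff : DifferentiableAt ℝ
      (fun X : ℝ => weightedCov s (fun u => q u * X ^ k u) (fun u => (k u : ℝ)) g) 0 := by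
    unfold weightedCov
    fun_prop (disch := simp [hN])
  -- at `X = 0` only the terms with `k u = 0` survive, and on those the function `k` vanishes
  have hzero : ∀ m : ℕ, (0 : ℝ) ^ m * m = 0 := fun m => by cases m <;> simp
  have h0 : weightedCov s (fun u => q u * (0 : ℝ) ^ k u) (fun u => (k u : ℝ)) g = 0 := by
    simp [weightedCov, mul_assoc, hzero]
  simpa [h0] using hdiff.hasDerivAt.isBigO_sub

theorem tendsto_exp_neg_mul_weightedCov {q : ι → ℝ} {m : ι → ℤ} (hq : ∀ u ∈ s, 0 ≤ q u) {u₁ : ι}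
    (hu₁ : u₁ ∈ s) (hq₁ : 0 < q u₁) (hmin : ∀ u ∈ s, q u ≠ 0 → m u₁ ≤ m u) (g : ι → ℝ) :
    Tendsto (fun τ : ℝ => exp (-τ) *
        weightedCov s (fun u => q u * exp (2 * τ * m u)) (fun u => (m u : ℝ)) g) atBot (𝓝 0) := by
  set k : ι → ℕ := fun u => (m u - m u₁).toNat
  have hk : ∀ u ∈ s, q u ≠ 0 → (k u : ℝ) = m u - m u₁ := fun u hu hqu => by
    have := Int.toNat_of_nonneg (sub_nonneg.mpr (hmin u hu hqu))
    exact_mod_cast this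
  have hW : ∀ τ : ℝ, ∀ u ∈ s,
      q u * exp (2 * τ * m u) = exp (2 * τ * m u₁) * (q u * exp (2 * τ) ^ k u) := by
    intro τ u hu
    by_cases hqu : q u = 0
    · simp [hqu]
    · rw [← exp_nat_mul, hk u hu hqu, mul_left_comm, ← exp_add]
      ring_nf
  have hreduce : ∀ τ : ℝ, weightedCov s (fun u => q u * exp (2 * τ * m u)) (fun u => (m u : ℝ)) g
      = weightedCov s (fun u => q u * exp (2 * τ) ^ k u) (fun u => (k u : ℝ)) g := fun τ =>
    calc _ = weightedCov s (fun u => exp (2 * τ * m u₁) * (q u * exp (2 * τ) ^ k u))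
            (fun u => (m u : ℝ)) g := weightedCov_congr s (hW τ) (fun _ _ _ => rfl) g
      _ = weightedCov s (fun u => q u * exp (2 * τ) ^ k u) (fun u => (k u : ℝ) + m u₁) g := by
          rw [weightedCov_const_mul_weight s (exp_pos _).ne']
          refine weightedCov_congr s (fun _ _ => rfl) (fun u hu h => ?_) g
          rw [hk u hu (left_ne_zero_of_mul h)]
          ring
      _ = _ := weightedCov_add_const s _ _ g _
  have hX : Tendsto (fun τ : ℝ => exp (2 * τ)) atBot (𝓝 0) :=
    tendsto_exp_atBot.comp (tendsto_id.const_mul_atBot two_pos)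
  have hO := (isBigO_refl (fun τ : ℝ => exp (-τ)) atBot).mul
    ((isBigO_weightedCov_pow s hq hu₁ hq₁ (k := k) (by simp [k]) g).comp_tendsto hX)
  simp only [Function.comp_apply, ← hreduce, ← exp_add] at hO
  exact hO.trans_tendsto (tendsto_exp_atBot.congr fun τ => by ring_nf)

end WeightedCovariance

section ExpSum

variable {n : ℕ} (S : Finset (Fin n → ℤ))

def expSum (φ : (Fin n → ℤ) → ℝ) (y : Fin n → ℝ) : ℝ :=
  ∑ u ∈ S, φ u * exp (2 * ∑ m, (u m : ℝ) * y m)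

theorem contDiff_expSum (φ : (Fin n → ℤ) → ℝ) : ContDiff ℝ 2 (expSum S φ) := by
  unfold expSum
  fun_prop

theorem expSum_pos {φ : (Fin n → ℤ) → ℝ} (hφ : ∀ u ∈ S, 0 ≤ φ u) (h : ∃ u ∈ S, 0 < φ u)
    (y : Fin n → ℝ) : 0 < expSum S φ y := by
  obtain ⟨u, hu, hφu⟩ := h
  exact Finset.sum_pos' (fun u hu => mul_nonneg (hφ u hu) (exp_pos _).le)
    ⟨u, hu, mul_pos hφu (exp_pos _)⟩

theorem pd1_expSum (φ : (Fin n → ℤ) → ℝ) (y w : Fin n → ℝ) :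
    pd1 (expSum S φ) y w = 2 * expSum S (fun u => φ u * ∑ m, (u m : ℝ) * w m) y := by
  have hlin : ∀ u : Fin n → ℤ, HasFDerivAt (fun y : Fin n → ℝ => ∑ m, (u m : ℝ) * y m)
      (∑ m, (u m : ℝ) • ContinuousLinearMap.proj m) y := fun u =>
    HasFDerivAt.fun_sum fun m _ => (hasFDerivAt_apply (𝕜 := ℝ) m y).const_mul (u m : ℝ)
  have h : HasFDerivAt (expSum S φ) _ y :=
    HasFDerivAt.fun_sum fun u (_ : u ∈ S) => (((hlin u).const_mul 2).exp).const_mul (φ u)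
  rw [pd1, h.fderiv]
  simp only [sum_apply, smul_apply, smul_eq_mul, ContinuousLinearMap.proj_apply, expSum,
    Finset.mul_sum, Finset.sum_mul]
  exact Finset.sum_congr rfl fun u _ => Finset.sum_congr rfl fun m _ => by ring

theorem pd2_expSum (φ : (Fin n → ℤ) → ℝ) (y w₁ w₂ : Fin n → ℝ) :
    pd2 (expSum S φ) y w₁ w₂
      = 4 * expSum S (fun u => φ u * (∑ m, (u m : ℝ) * w₁ m) * ∑ m, (u m : ℝ) * w₂ m) y := by
  have h : (fun y => fderiv ℝ (expSum S φ) y w₁)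
      = fun y => 2 * expSum S (fun u => φ u * ∑ m, (u m : ℝ) * w₁ m) y :=
    funext fun y => pd1_expSum S φ y w₁
  rw [pd2, h, fderiv_const_mul ((contDiff_expSum S _).differentiable two_ne_zero y),
    smul_apply, ← pd1, pd1_expSum, smul_eq_mul]
  ring

theorem pd2_log_expSum {φ : (Fin n → ℤ) → ℝ} (hφ : ∀ y, expSum S φ y ≠ 0) (x w₁ w₂ : Fin n → ℝ) :
    pd2 (fun y => log (expSum S φ y)) x w₁ w₂
      = 4 * weightedCov S (fun u => φ u * exp (2 * ∑ m, (u m : ℝ) * x m))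
          (fun u => ∑ m, (u m : ℝ) * w₁ m) (fun u => ∑ m, (u m : ℝ) * w₂ m) := by
  rw [pd2_log (contDiff_expSum S φ) hφ, pd2_expSum, pd1_expSum, pd1_expSum]
  simp only [weightedCov, expSum, mul_right_comm _ (exp _)]
  ring

end ExpSum

section Potential

variable {n d : ℕ}

theorem xi_update (V : Fin n → Fin n → ℝ) (t : Fin n → ℝ) (j : Fin n) (s : ℝ) :
    xi V (Function.update t j s) = xi V (Function.update t j 0) + s • V j := by
  simp [xi, Function.update_apply, ite_smul, Finset.sum_ite, Finset.filter_eq', add_comm]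

theorem tendsto_exp_neg_mul_weightedCov_xi_update (S : Finset (Fin n → ℤ)) {φ : (Fin n → ℤ) → ℝ}
    (hφ : ∀ u ∈ S, 0 ≤ φ u) (V : Fin n → Fin n → ℤ) (t : Fin n → ℝ) (j : Fin n)
    {u₁ : Fin n → ℤ} (hu₁ : u₁ ∈ S) (hφ₁ : 0 < φ u₁)
    (hmin : ∀ u ∈ S, φ u ≠ 0 → ∑ p, u₁ p * V j p ≤ ∑ p, u p * V j p) (f : (Fin n → ℤ) → ℝ) :
    Tendsto (fun s : ℝ => exp (-s) *
        weightedCov S (fun u => φ u * exp (2 * ∑ m, (u m : ℝ) *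
            xi (fun m p => (V m p : ℝ)) (Function.update t j s) m))
          (fun u => ∑ m, (u m : ℝ) * V j m) f) atBot (𝓝 0) := by
  have hW : ∀ (s : ℝ) (u : Fin n → ℤ),
      φ u * exp (2 * ∑ m, (u m : ℝ) * xi (fun m p => (V m p : ℝ)) (Function.update t j s) m)
        = φ u * exp (2 * ∑ m, (u m : ℝ) * xi (fun m p => (V m p : ℝ)) (Function.update t j 0) m)
          * exp (2 * s * ((∑ p, u p * V j p : ℤ) : ℝ)) := by
    intro s u
    rw [xi_update, mul_assoc, ← exp_add]
    push_cast
    simp only [Pi.add_apply, Pi.smul_apply, smul_eq_mul, mul_add, Finset.sum_add_distrib,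
      Finset.mul_sum]
    exact congrArg (fun z => φ u * exp (_ + z)) (Finset.sum_congr rfl fun _ _ => by ring)
  have hf : (fun u : Fin n → ℤ => ∑ m, (u m : ℝ) * V j m)
      = fun u => ((∑ p, u p * V j p : ℤ) : ℝ) := by
    push_cast
    rfl
  refine (tendsto_exp_neg_mul_weightedCov S (m := fun u => ∑ p, u p * V j p) (q := fun u =>
      φ u * exp (2 * ∑ m, (u m : ℝ) * xi (fun m p => (V m p : ℝ)) (Function.update t j 0) m))
    (fun u hu => mul_nonneg (hφ u hu) (exp_pos _).le) hu₁ (mul_pos hφ₁ (exp_pos _))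
    (fun u hu h => hmin u hu (left_ne_zero_of_mul h)) f).congr fun s => ?_
  rw [hf]
  congr 2
  exact funext fun u => (hW s u).symm

variable (v : Fin d → Fin n → ℤ) (lam : Fin d → ℤ) (S : Finset (Fin n → ℤ))
  (c : (Fin n → ℤ) → ℝ) (a : Fin d → ℤ)

theorem gzero_eq_sum_log (hψ : ∀ i y, expSum S (fun u => c u * lfun v lam i u) y ≠ 0)
    (hc : ∀ y, expSum S c y ≠ 0) :
    gzero v lam S c a = fun y => ∑ i, (-(1 / 2) * a i) *
      (log (expSum S (fun u => c u * lfun v lam i u) y) - log (expSum S c y)) := by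
  funext y
  rw [gzero, Finset.mul_sum]
  refine Finset.sum_congr rfl fun i _ => ?_
  rw [← log_div (hψ i y) (hc y), mul_assoc]
  rfl

theorem pd2_gzero (hψ : ∀ i y, expSum S (fun u => c u * lfun v lam i u) y ≠ 0)
    (hc : ∀ y, expSum S c y ≠ 0) (x w₁ w₂ : Fin n → ℝ) :
    pd2 (gzero v lam S c a) x w₁ w₂ = ∑ i, (-2 * a i) *
      (weightedCov S (fun u => c u * lfun v lam i u * exp (2 * ∑ m, (u m : ℝ) * x m))
          (fun u => ∑ m, (u m : ℝ) * w₁ m) (fun u => ∑ m, (u m : ℝ) * w₂ m)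
        - weightedCov S (fun u => c u * exp (2 * ∑ m, (u m : ℝ) * x m))
          (fun u => ∑ m, (u m : ℝ) * w₁ m) (fun u => ∑ m, (u m : ℝ) * w₂ m)) := by
  have hlog : ∀ φ : (Fin n → ℤ) → ℝ, (∀ y, expSum S φ y ≠ 0) →
      ContDiffAt ℝ 2 (fun y => log (expSum S φ y)) x := fun φ hφ =>
    ((contDiff_expSum S φ).log hφ).contDiffAt
  rw [gzero_eq_sum_log v lam S c a hψ hc,
    pd2_sum_const_mul _ _ fun i _ => (hlog _ (hψ i)).sub (hlog c hc)]
  refine Finset.sum_congr rfl fun i _ => ?_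
  rw [pd2_sub (hlog _ (hψ i)) (hlog c hc), pd2_log_expSum S (hψ i), pd2_log_expSum S hc]
  ring

theorem pd2_gzero_comm (hψ : ∀ i y, expSum S (fun u => c u * lfun v lam i u) y ≠ 0)
    (hc : ∀ y, expSum S c y ≠ 0) (x w₁ w₂ : Fin n → ℝ) :
    pd2 (gzero v lam S c a) x w₁ w₂ = pd2 (gzero v lam S c a) x w₂ w₁ := by
  simp only [pd2_gzero v lam S c a hψ hc, weightedCov_comm S _ (fun u => ∑ m, (u m : ℝ) * w₁ m)]

theorem expSum_lfun_pos (hnd : n ≤ d) (hS : ∀ u ∈ S, ∀ i, 0 ≤ lfun v lam i u)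
    (hc : ∀ u ∈ S, 0 ≤ c u)
    (hu0 : ∃ u₀ ∈ S, 0 < c u₀ ∧ ∀ i : Fin d, n ≤ (i : ℕ) → 1 ≤ lfun v lam i u₀)
    (huk : ∀ k : Fin n, ∃ u ∈ S, 0 < c u ∧ lfun v lam (Fin.castLE hnd k) u = 1)
    (i : Fin d) (y : Fin n → ℝ) : 0 < expSum S (fun u => c u * lfun v lam i u) y := by
  refine expSum_pos S (fun u hu => mul_nonneg (hc u hu) (by exact_mod_cast hS u hu i)) ?_ y
  by_cases hi : (i : ℕ) < n
  · obtain ⟨i, rfl⟩ : ∃ i' : Fin n, Fin.castLE hnd i' = i := ⟨⟨i, hi⟩, rfl⟩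
    obtain ⟨u, hu, hcu, hlu⟩ := huk i
    exact ⟨u, hu, mul_pos hcu (by rw [hlu]; norm_num)⟩
  · obtain ⟨u₀, hu₀, hc₀, hl₀⟩ := hu0
    exact ⟨u₀, hu₀, mul_pos hc₀ (by exact_mod_cast hl₀ i (not_lt.mp hi))⟩

theorem exists_min_lfun_on_support (hnd : n ≤ d) (hS : ∀ u ∈ S, ∀ i, 0 ≤ lfun v lam i u)
    (hu0 : ∃ u₀ ∈ S, 0 < c u₀ ∧
      (∀ j : Fin n, lfun v lam (Fin.castLE hnd j) u₀ = 0) ∧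
      (∀ i : Fin d, n ≤ (i : ℕ) → 1 ≤ lfun v lam i u₀))
    (huk : ∀ k : Fin n, ∃ u ∈ S, 0 < c u ∧
      lfun v lam (Fin.castLE hnd k) u = 1 ∧
      (∀ j : Fin n, j ≠ k → lfun v lam (Fin.castLE hnd j) u = 0))
    (j : Fin n) (i : Fin d) : ∃ u₁ ∈ S, 0 < c u₁ * lfun v lam i u₁ ∧
      ∀ u ∈ S, c u * lfun v lam i u ≠ 0 →
        lfun v lam (Fin.castLE hnd j) u₁ ≤ lfun v lam (Fin.castLE hnd j) u := by
  by_cases hi : (i : ℕ) < n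
  · obtain ⟨i, rfl⟩ : ∃ i' : Fin n, Fin.castLE hnd i' = i := ⟨⟨i, hi⟩, rfl⟩
    obtain ⟨u₁, hu₁, hc₁, hl₁, hl₁'⟩ := huk i
    have hpos : 0 < c u₁ * lfun v lam (Fin.castLE hnd i) u₁ := mul_pos hc₁ (by rw [hl₁]; norm_num)
    by_cases hij : j = i
    · refine ⟨u₁, hu₁, hpos, fun u hu hne => ?_⟩
      have hlu : lfun v lam (Fin.castLE hnd i) u ≠ 0 := by exact_mod_cast right_ne_zero_of_mul hne
      have := hS u hu (Fin.castLE hnd i)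
      rw [hij, hl₁]
      omega
    · exact ⟨u₁, hu₁, hpos, fun u hu _ => by rw [hl₁' j hij]; exact hS u hu _⟩
  · obtain ⟨u₀, hu₀, hc₀, hl₀, hl₀'⟩ := hu0
    exact ⟨u₀, hu₀, mul_pos hc₀ (by exact_mod_cast hl₀' i (not_lt.mp hi)),
      fun u hu _ => by rw [hl₀ j]; exact hS u hu _⟩

theorem tendsto_exp_neg_mul_pd2_gzero (hnd : n ≤ d) (hS : ∀ u ∈ S, ∀ i, 0 ≤ lfun v lam i u)
    (hc : ∀ u ∈ S, 0 ≤ c u)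
    (hu0 : ∃ u₀ ∈ S, 0 < c u₀ ∧
      (∀ j : Fin n, lfun v lam (Fin.castLE hnd j) u₀ = 0) ∧
      (∀ i : Fin d, n ≤ (i : ℕ) → 1 ≤ lfun v lam i u₀))
    (huk : ∀ k : Fin n, ∃ u ∈ S, 0 < c u ∧
      lfun v lam (Fin.castLE hnd k) u = 1 ∧
      (∀ j : Fin n, j ≠ k → lfun v lam (Fin.castLE hnd j) u = 0))
    (j k : Fin n) (t : Fin n → ℝ) :
    Tendsto (fun s : ℝ =>
        exp (-s - t k) *
          pd2 (gzero v lam S c a)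
            (xi (fun m p => (v (Fin.castLE hnd m) p : ℝ)) (Function.update t j s))
            (fun p => (v (Fin.castLE hnd j) p : ℝ))
            (fun p => (v (Fin.castLE hnd k) p : ℝ)))
      atBot (𝓝 0) := by
  have hψ : ∀ i y, expSum S (fun u => c u * lfun v lam i u) y ≠ 0 := fun i y =>
    (expSum_lfun_pos v lam S c hnd hS hc (hu0.imp fun _ ⟨hu, hc₀, _, hl⟩ => ⟨hu, hc₀, hl⟩)
      (fun k => (huk k).imp fun _ ⟨hu, hck, hl, _⟩ => ⟨hu, hck, hl⟩) i y).ne'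
  have ⟨u₀, hu₀, hc₀, hl₀, _⟩ := hu0
  have hc' : ∀ y, expSum S c y ≠ 0 := fun y => (expSum_pos S hc ⟨u₀, hu₀, hc₀⟩ y).ne'
  have hlim : ∀ φ : (Fin n → ℤ) → ℝ, (∀ u ∈ S, 0 ≤ φ u) → (∃ u₁ ∈ S, 0 < φ u₁ ∧
      ∀ u ∈ S, φ u ≠ 0 → lfun v lam (Fin.castLE hnd j) u₁ ≤ lfun v lam (Fin.castLE hnd j) u) →
      Tendsto (fun s : ℝ => exp (-s - t k) * weightedCov S (fun u => φ u * exp (2 * ∑ m, (u m : ℝ) *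
          xi (fun m p => (v (Fin.castLE hnd m) p : ℝ)) (Function.update t j s) m))
        (fun u => ∑ m, (u m : ℝ) * v (Fin.castLE hnd j) m)
        (fun u => ∑ m, (u m : ℝ) * v (Fin.castLE hnd k) m)) atBot (𝓝 0) := by
    rintro φ hφ ⟨u₁, hu₁, hφ₁, hmin⟩
    have h := (tendsto_exp_neg_mul_weightedCov_xi_update S hφ (fun m => v (Fin.castLE hnd m)) t j
      hu₁ hφ₁ (fun u hu hne => by simpa [lfun] using hmin u hu hne)
      (fun u => ∑ m, (u m : ℝ) * v (Fin.castLE hnd k) m)).const_mul (exp (-t k))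
    rw [mul_zero] at h
    refine h.congr fun s => ?_
    rw [← mul_assoc, ← exp_add, neg_add_eq_sub, sub_eq_add_neg, add_comm]
  have := tendsto_finsetSum Finset.univ fun i _ =>
    ((hlim _ (fun u hu => mul_nonneg (hc u hu) (by exact_mod_cast hS u hu i))
        (exists_min_lfun_on_support v lam S c hnd hS hu0 huk j i)).sub
      (hlim c hc ⟨u₀, hu₀, hc₀, fun u hu _ => by rw [hl₀ j]; exact hS u hu _⟩)).const_mul
      (-2 * (a i : ℝ))
  simp only [sub_self, mul_zero, Finset.sum_const_zero] at this
  refine this.congr fun s => ?_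
  rw [pd2_gzero v lam S c a hψ hc', Finset.mul_sum]
  exact Finset.sum_congr rfl fun i _ => by ring

end Potential

theorem gzero_mixed_second_derivative_limit_general (n d : ℕ) (hnd : n ≤ d)
    (v : Fin d → Fin n → ℤ) (lam : Fin d → ℤ)
    (S : Finset (Fin n → ℤ))
    (hS : ∀ u : Fin n → ℤ, u ∈ S ↔ ∀ i : Fin d, 0 ≤ lfun v lam i u)
    (c : (Fin n → ℤ) → ℝ) (hc : ∀ u ∈ S, 0 ≤ c u)
    (hu0 : ∃ u₀ ∈ S, 0 < c u₀ ∧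
      (∀ j : Fin n, lfun v lam (Fin.castLE hnd j) u₀ = 0) ∧
      (∀ i : Fin d, n ≤ (i : ℕ) → 1 ≤ lfun v lam i u₀))
    (huk : ∀ k : Fin n, ∃ u ∈ S, 0 < c u ∧
      lfun v lam (Fin.castLE hnd k) u = 1 ∧
      (∀ j : Fin n, j ≠ k → lfun v lam (Fin.castLE hnd j) u = 0))
    (a : Fin d → ℤ)
    (j k : Fin n) (t : Fin n → ℝ) :
    Tendsto (fun s : ℝ =>
        Real.exp (-s - t k) *
          pd2 (gzero v lam S c a)
            (xi (fun m p => (v (Fin.castLE hnd m) p : ℝ)) (Function.update t j s))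
            (fun p => (v (Fin.castLE hnd j) p : ℝ))
            (fun p => (v (Fin.castLE hnd k) p : ℝ)))
      atBot (nhds 0) ∧
    Tendsto (fun s : ℝ =>
        Real.exp (-(t j) - s) *
          pd2 (gzero v lam S c a)
            (xi (fun m p => (v (Fin.castLE hnd m) p : ℝ)) (Function.update t k s))
            (fun p => (v (Fin.castLE hnd j) p : ℝ))
            (fun p => (v (Fin.castLE hnd k) p : ℝ)))
      atBot (nhds 0) := by
  have hS' : ∀ u ∈ S, ∀ i, 0 ≤ lfun v lam i u := fun u hu => (hS u).mp hu
  have hψ : ∀ i y, expSum S (fun u => c u * lfun v lam i u) y ≠ 0 := fun i y =>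
    (expSum_lfun_pos v lam S c hnd hS' hc (hu0.imp fun _ ⟨hu, hc₀, _, hl⟩ => ⟨hu, hc₀, hl⟩)
      (fun k => (huk k).imp fun _ ⟨hu, hck, hl, _⟩ => ⟨hu, hck, hl⟩) i y).ne'
  have hc' : ∀ y, expSum S c y ≠ 0 := fun y =>
    (expSum_pos S hc (hu0.imp fun _ ⟨hu, hc₀, _⟩ => ⟨hu, hc₀⟩) y).ne'
  refine ⟨tendsto_exp_neg_mul_pd2_gzero v lam S c a hnd hS' hc hu0 huk j k t,
    (tendsto_exp_neg_mul_pd2_gzero v lam S c a hnd hS' hc hu0 huk k j t).congr fun s => ?_⟩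
  rw [pd2_gzero_comm v lam S c a hψ hc', sub_eq_add_neg, add_comm, ← sub_eq_add_neg]

/-- for distinct `j,k` and fixed remaining coordinates,
`e^{−tⱼ−tₖ}·vⱼᵀ(Hess g₀)(ξ(t))vₖ` tends to `0` as `tⱼ → −∞`, and also as `tₖ → −∞`. -/
theorem gzero_mixed_second_derivative_limit (n d : ℕ) (hnd : n ≤ d)
    (v : Fin d → Fin n → ℤ) (lam : Fin d → ℤ)
    (S : Finset (Fin n → ℤ))
    (hS : ∀ u : Fin n → ℤ, u ∈ S ↔ ∀ i : Fin d, 0 ≤ lfun v lam i u)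
    (hbdd : Bornology.IsBounded {x : Fin n → ℝ | ∀ i : Fin d, 0 ≤ lfunR v lam i x})
    (c : (Fin n → ℤ) → ℝ) (hc : ∀ u ∈ S, 0 ≤ c u)
    (hbasis : IsUnit (Matrix.of fun j k : Fin n => v (Fin.castLE hnd j) k).det)
    (hu0 : ∃ u₀ ∈ S, 0 < c u₀ ∧
      (∀ j : Fin n, lfun v lam (Fin.castLE hnd j) u₀ = 0) ∧
      (∀ i : Fin d, n ≤ (i : ℕ) → 1 ≤ lfun v lam i u₀))
    (huk : ∀ k : Fin n, ∃ u ∈ S, 0 < c u ∧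
      lfun v lam (Fin.castLE hnd k) u = 1 ∧
      (∀ j : Fin n, j ≠ k → lfun v lam (Fin.castLE hnd j) u = 0))
    (a : Fin d → ℤ)
    (j k : Fin n) (hjk : j ≠ k) (t : Fin n → ℝ) :
    Tendsto (fun s : ℝ =>
        Real.exp (-s - t k) *
          pd2 (gzero v lam S c a)
            (xi (fun m p => (v (Fin.castLE hnd m) p : ℝ)) (Function.update t j s))
            (fun p => (v (Fin.castLE hnd j) p : ℝ))
            (fun p => (v (Fin.castLE hnd k) p : ℝ)))
      atBot (nhds 0) ∧
    Tendsto (fun s : ℝ =>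
        Real.exp (-(t j) - s) *
          pd2 (gzero v lam S c a)
            (xi (fun m p => (v (Fin.castLE hnd m) p : ℝ)) (Function.update t k s))
            (fun p => (v (Fin.castLE hnd j) p : ℝ))
            (fun p => (v (Fin.castLE hnd k) p : ℝ)))
      atBot (nhds 0) :=
  gzero_mixed_second_derivative_limit_general n d hnd v lam S hS c hc hu0 huk a j k t
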